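/- Let w(v) = (1 + |v|²)^{β/2} e^{ϖ|v|²} with β > 3 and 0 < ϖ ≤ 1/8. Then there exists C > 0 such that for every v ∈ ℝ³, ∫_{ℝ³} (|v−u| + |v−u|^{−1}) e^{−|v−u|²/8} e^{−(|v|²−|u|²)²/(8|v−u|²)} · (w(v)/w(u)) du ≤ C (1 + |v|)^{−1}. -/

import Mathlib

/-!
Write `u = v - ζ` and `s = |ζ|`, so that `|v|² - |u|² = 2⟨v, ζ⟩ - s²`. With `q = (|v|² - |u|²)/s`
the exponent `-s²/8 - q²/8 + ϖ q s` of the Gaussian factors times the exponential part of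
`w(v)/w(u)` is, for `ϖ ≤ 1/8`, dominated by a negative definite quadratic form in `(s, |q|)`; this
leaves `e^{-s²/64 - |⟨v, ζ⟩|/16}`, while Peetre's inequality bounds the polynomial part of
`w(v)/w(u)` by a power of `1 + s²`. The integral is invariant under rotations, so `v` may be put on
the first axis, where `⟨v, ζ⟩ = |v| ζ₁`. Splitting `1/s ≤ |ζ₂|^{-1/2} |ζ₃|^{-1/2}` dominates the
integrand by a product of one-dimensional integrable functions, and the factor `e^{-|v| |ζ₁|/16}`
integrates to `O(1/(1 + |v|))`.
-/

open Real MeasureTheory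

noncomputable section

/-- Velocity space `ℝ³`. -/
abbrev V := EuclideanSpace ℝ (Fin 3)

/-- The weight function `w(v) = (1+|v|²)^{β/2} e^{ϖ|v|²}`. -/
def wt (β ϖ : ℝ) (v : V) : ℝ := (1 + ‖v‖ ^ 2) ^ (β / 2) * Real.exp (ϖ * ‖v‖ ^ 2)

open Set

theorem exists_one_add_sq_rpow_le_mul_exp {γ c : ℝ} (hγ : 0 ≤ γ) (hc : 0 < c) :
    ∃ C > 0, ∀ x : ℝ, (1 + x ^ 2) ^ γ ≤ C * exp (c * x ^ 2) := by
  set ε := c / (γ + c)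
  have hε : 0 < ε := by positivity
  have hε1 : ε ≤ 1 := div_le_one_of_le₀ (by linarith) (by positivity)
  have hγε : γ * ε ≤ c := by
    rw [mul_div_assoc', div_le_iff₀ (by positivity)]
    nlinarith
  refine ⟨ε⁻¹ ^ γ, by positivity, fun x => ?_⟩
  have hbase : 1 + x ^ 2 ≤ ε⁻¹ * exp (ε * x ^ 2) := by
    rw [le_inv_mul_iff₀ hε]
    nlinarith [add_one_le_exp (ε * x ^ 2), sq_nonneg x]
  calc (1 + x ^ 2) ^ γ ≤ (ε⁻¹ * exp (ε * x ^ 2)) ^ γ := by gcongr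
    _ = ε⁻¹ ^ γ * exp (γ * ε * x ^ 2) := by
        rw [mul_rpow (by positivity) (exp_pos _).le, ← exp_mul]
        ring_nf
    _ ≤ ε⁻¹ ^ γ * exp (c * x ^ 2) := by gcongr

theorem gaussian_exponent_le {ϖ s t : ℝ} (hs : 0 < s) (hϖ0 : 0 ≤ ϖ) (hϖ : ϖ ≤ 1 / 8) :
    -s ^ 2 / 8 - (2 * t - s ^ 2) ^ 2 / (8 * s ^ 2) + ϖ * (2 * t - s ^ 2) ≤
      -s ^ 2 / 64 - |t| / 16 := by
  set q := (2 * t - s ^ 2) / s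
  have hq : 2 * t - s ^ 2 = q * s := (div_mul_cancel₀ _ hs.ne').symm
  have hsq : (q * s) ^ 2 / (8 * s ^ 2) = q ^ 2 / 8 := by field_simp
  have hϖq : ϖ * (q * s) ≤ |q| * s / 8 := by
    have : ϖ * (q * s) ≤ ϖ * (|q| * s) := by gcongr; exact le_abs_self q
    nlinarith [mul_le_mul_of_nonneg_right hϖ (mul_nonneg (abs_nonneg q) hs.le)]
  have ht : |t| ≤ (|q| * s + s ^ 2) / 2 := by
    have h2t : 2 * |t| ≤ |q| * s + s ^ 2 := by
      calc 2 * |t| = |q * s + s ^ 2| := by rw [← hq]; simp [abs_mul]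
        _ ≤ |q| * s + s ^ 2 := by
          have := abs_add_le (q * s) (s ^ 2)
          rwa [abs_mul, abs_of_pos hs, abs_sq] at this
    linarith
  rw [hq, hsq]
  nlinarith [sq_nonneg (|q| - s), sq_abs q, abs_nonneg q]

theorem add_inv_le_one_add_sq_mul {s : ℝ} (hs : 0 ≤ s) : s + s⁻¹ ≤ (1 + s ^ 2) * (1 + s⁻¹) := by
  have : 0 ≤ s⁻¹ := inv_nonneg.mpr hs
  nlinarith [sq_nonneg (s - 1), mul_nonneg (sq_nonneg s) this]

section Peetre

variable {E : Type*} [SeminormedAddCommGroup E]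

theorem one_add_norm_sq_le_two_mul (v u : E) :
    1 + ‖v‖ ^ 2 ≤ 2 * (1 + ‖v - u‖ ^ 2) * (1 + ‖u‖ ^ 2) := by
  have h := norm_le_norm_add_norm_sub' v u
  nlinarith [norm_nonneg u, norm_nonneg (v - u), sq_nonneg (‖u‖ - ‖v - u‖),
    mul_nonneg (sq_nonneg ‖u‖) (sq_nonneg ‖v - u‖), norm_nonneg v]

theorem one_add_norm_sq_div_rpow_le (t : ℝ) (v u : E) :
    ((1 + ‖v‖ ^ 2) / (1 + ‖u‖ ^ 2)) ^ t ≤ (2 * (1 + ‖v - u‖ ^ 2)) ^ |t| := by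
  rcases le_or_gt 0 t with ht | ht
  · rw [abs_of_nonneg ht]
    gcongr
    rw [div_le_iff₀ (by positivity)]
    exact one_add_norm_sq_le_two_mul v u
  · rw [abs_of_neg ht, ← inv_div, inv_rpow (by positivity), ← rpow_neg (by positivity)]
    gcongr
    · linarith
    rw [div_le_iff₀ (by positivity), norm_sub_rev]
    exact one_add_norm_sq_le_two_mul u v

end Peetre

section Isometry

variable {E G : Type*} [NormedAddCommGroup E] [InnerProductSpace ℝ E] [FiniteDimensional ℝ E]
  [MeasurableSpace E] [BorelSpace E] [NormedAddCommGroup G] [NormedSpace ℝ G]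

theorem integral_eq_of_invariant_of_norm_eq {f : E → E → G}
    (hf : ∀ (L : E ≃ₗᵢ[ℝ] E) v u, f (L v) (L u) = f v u) {v w : E} (h : ‖v‖ = ‖w‖) :
    ∫ u, f v u = ∫ u, f w u := by
  set L := Submodule.reflection (ℝ ∙ (w - v))ᗮ
  have hL : L w = v := Submodule.reflection_sub h.symm
  calc ∫ u, f v u = ∫ u, f v (L u) :=
        (L.measurePreserving.integral_comp L.toMeasurableEquiv.measurableEmbedding _).symm
    _ = ∫ u, f w u := by simp_rw [← hL, hf]

end Isometry

namespace EuclideanSpace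

variable {ι : Type*} [Fintype ι]

theorem integrable_prod_apply {f : ι → ℝ → ℝ} (hf : ∀ i, Integrable (f i)) :
    Integrable fun u : EuclideanSpace ℝ ι => ∏ i, f i (u i) :=
  (PiLp.volume_preserving_ofLp ι).integrable_comp_of_integrable (Integrable.fintype_prod hf)

theorem integral_prod_apply (f : ι → ℝ → ℝ) :
    ∫ u : EuclideanSpace ℝ ι, ∏ i, f i (u i) = ∏ i, ∫ x, f i x := by
  rw [← integral_fintype_prod_volume_eq_prod, ← (PiLp.volume_preserving_ofLp ι).integral_comp
    (MeasurableEquiv.toLp 2 (ι → ℝ)).symm.measurableEmbedding]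

theorem ae_apply_ne_zero (i : ι) : ∀ᵐ u : EuclideanSpace ℝ ι, u i ≠ 0 := by
  classical
  have hker : LinearMap.ker (projₗ (𝕜 := ℝ) i) ≠ ⊤ := by
    rw [Ne, Submodule.eq_top_iff', not_forall]
    exact ⟨single i 1, by simp⟩
  rw [ae_iff]
  convert Measure.addHaar_submodule volume _ hker using 2
  ext u
  simp

end EuclideanSpace

theorem integrable_of_integrableOn_Ioi_of_even {f : ℝ → ℝ} (he : ∀ x, f (-x) = f x)
    (h : IntegrableOn f (Ioi 0)) : Integrable f := by
  have hIic : IntegrableOn f (Iic 0) := by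
    rw [← (Measure.measurePreserving_neg (volume : Measure ℝ)).integrableOn_comp_preimage
      (Homeomorph.neg ℝ).measurableEmbedding]
    simpa [Function.comp_def, he] using (integrableOn_Ici_iff_integrableOn_Ioi).mpr h
  simpa using hIic.union h

theorem integrable_exp_neg_mul_abs {b : ℝ} (hb : 0 < b) :
    Integrable fun x : ℝ => exp (-(b * |x|)) := by
  refine integrable_of_integrableOn_Ioi_of_even (fun x => by rw [abs_neg]) ?_
  refine ((exp_neg_integrableOn_Ioi 0 hb).congr_fun (fun x hx => ?_) measurableSet_Ioi)
  simp only [abs_of_pos (mem_Ioi.mp hx), neg_mul]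

theorem integral_exp_neg_mul_abs {b : ℝ} (hb : 0 < b) :
    ∫ x : ℝ, exp (-(b * |x|)) = 2 / b := by
  rw [integral_comp_abs (f := fun x => exp (-(b * x))),
    integral_comp_mul_left_Ioi (fun x => exp (-x)) 0 hb, mul_zero, integral_exp_neg_Ioi_zero,
    smul_eq_mul, mul_one, div_eq_mul_inv]

theorem exp_neg_mul_abs_div_le_one {a c : ℝ} (ha : 0 ≤ a) (hc : 0 < c) (x : ℝ) :
    exp (-(a * |x|) / c) ≤ 1 := by
  rw [exp_le_one_iff, neg_div, neg_nonpos]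
  positivity

theorem MeasureTheory.Integrable.exp_neg_mul_abs_div_mul {f : ℝ → ℝ} (hf : Integrable f) {a c : ℝ}
    (ha : 0 ≤ a) (hc : 0 < c) : Integrable fun x => exp (-(a * |x|) / c) * f x :=
  hf.bdd_mul (c := 1) (by fun_prop) (.of_forall fun x => by
    simpa [abs_of_pos (exp_pos _)] using exp_neg_mul_abs_div_le_one ha hc x)

theorem integral_exp_neg_mul_abs_mul_le {f : ℝ → ℝ} (hf : Integrable f) (hf0 : 0 ≤ f)
    {M : ℝ} (hM : ∀ x, f x ≤ M) {c a : ℝ} (hc : 0 < c) (ha : 0 ≤ a) :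
    ∫ x, exp (-(a * |x|) / c) * f x ≤ (2 * (∫ x, f x) + 4 * c * M) / (1 + a) := by
  have hint := hf.exp_neg_mul_abs_div_mul ha hc
  have hM0 : 0 ≤ M := (hf0 0).trans (hM 0)
  have hJ : 0 ≤ ∫ x, f x := integral_nonneg hf0
  rcases le_or_gt a 1 with ha1 | ha1
  · have hle : ∫ x, exp (-(a * |x|) / c) * f x ≤ ∫ x, f x :=
      integral_mono hint hf fun x =>
        mul_le_of_le_one_left (hf0 x) (exp_neg_mul_abs_div_le_one ha hc x)
    have hI0 : 0 ≤ ∫ x, exp (-(a * |x|) / c) * f x :=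
      integral_nonneg fun x => mul_nonneg (exp_pos _).le (hf0 x)
    rw [le_div_iff₀ (by linarith)]
    nlinarith [mul_le_mul_of_nonneg_left ha1 hI0, mul_nonneg hc.le hM0]
  · have hb : 0 < a / c := by positivity
    have hle : ∫ x, exp (-(a * |x|) / c) * f x ≤ ∫ x, M * exp (-(a / c * |x|)) := by
      refine integral_mono hint ((integrable_exp_neg_mul_abs hb).const_mul M) fun x => ?_
      rw [mul_comm, show -(a / c * |x|) = -(a * |x|) / c by ring]
      exact mul_le_mul_of_nonneg_right (hM x) (exp_pos _).le
    rw [integral_const_mul, integral_exp_neg_mul_abs hb] at hle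
    refine hle.trans ?_
    have hfrac : (1 + a) / a ≤ 2 := by rw [div_le_iff₀ (by linarith)]; linarith
    have : M * (2 / (a / c)) * (1 + a) = 2 * c * M * ((1 + a) / a) := by field_simp
    rw [le_div_iff₀ (by linarith), this]
    nlinarith [mul_nonneg hc.le hM0]

-- The junk value `0 ^ (-1/2) = 0` is harmless: coordinates vanish only on a null set.
def singularGaussian (x : ℝ) : ℝ := (1 + |x| ^ (-(1 / 2) : ℝ)) * exp (-x ^ 2 / 128)

theorem integrable_exp_neg_sq_div {c : ℝ} (hc : 0 < c) :
    Integrable fun x : ℝ => exp (-x ^ 2 / c) := by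
  simpa [neg_div, div_eq_inv_mul] using integrable_exp_neg_mul_sq (inv_pos.mpr hc)

theorem integrable_singularGaussian : Integrable singularGaussian := by
  have hsing : Integrable fun x : ℝ => |x| ^ (-(1 / 2) : ℝ) * exp (-x ^ 2 / 128) := by
    refine integrable_of_integrableOn_Ioi_of_even (fun x => by rw [abs_neg, neg_sq]) ?_
    refine (integrableOn_rpow_mul_exp_neg_mul_sq (b := 1 / 128) (by norm_num) (s := -(1 / 2))
      (by norm_num)).congr_fun (fun x hx => ?_) measurableSet_Ioi
    rw [abs_of_pos (mem_Ioi.mp hx)]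
    ring_nf
  refine ((integrable_exp_neg_sq_div (c := 128) (by norm_num)).add hsing).congr
    (.of_forall fun x => ?_)
  simp only [Pi.add_apply, singularGaussian]
  ring

def gradKernel (β ϖ : ℝ) (v u : V) : ℝ :=
  (‖v - u‖ + ‖v - u‖⁻¹) * exp (-‖v - u‖ ^ 2 / 8) *
    exp (-(‖v‖ ^ 2 - ‖u‖ ^ 2) ^ 2 / (8 * ‖v - u‖ ^ 2)) * (wt β ϖ v / wt β ϖ u)

theorem wt_pos (β ϖ : ℝ) (v : V) : 0 < wt β ϖ v := by
  unfold wt; positivity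

theorem wt_div_wt (β ϖ : ℝ) (v u : V) :
    wt β ϖ v / wt β ϖ u =
      ((1 + ‖v‖ ^ 2) / (1 + ‖u‖ ^ 2)) ^ (β / 2) * exp (ϖ * (‖v‖ ^ 2 - ‖u‖ ^ 2)) := by
  rw [wt, wt, mul_div_mul_comm, ← exp_sub, div_rpow (by positivity) (by positivity), mul_sub]

theorem gradKernel_nonneg (β ϖ : ℝ) (v u : V) : 0 ≤ gradKernel β ϖ v u := by
  have := wt_pos β ϖ v
  have := wt_pos β ϖ u
  unfold gradKernel
  positivity

theorem gradKernel_linearIsometryEquiv (β ϖ : ℝ) (L : V ≃ₗᵢ[ℝ] V) (v u : V) :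
    gradKernel β ϖ (L v) (L u) = gradKernel β ϖ v u := by
  simp only [gradKernel, wt, ← map_sub, LinearIsometryEquiv.norm_map]

theorem gradKernel_sub_le {β ϖ : ℝ} (hϖ0 : 0 ≤ ϖ) (hϖ : ϖ ≤ 1 / 8) (v ζ : V) :
    gradKernel β ϖ v (v - ζ) ≤
      (‖ζ‖ + ‖ζ‖⁻¹) * (2 * (1 + ‖ζ‖ ^ 2)) ^ |β / 2| *
        (exp (-‖ζ‖ ^ 2 / 64) * exp (-|inner ℝ v ζ| / 16)) := by
  rcases eq_or_ne ζ 0 with rfl | hζ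
  · simp [gradKernel]
  have hs : 0 < ‖ζ‖ := norm_pos_iff.mpr hζ
  have hD : ‖v‖ ^ 2 - ‖v - ζ‖ ^ 2 = 2 * inner ℝ v ζ - ‖ζ‖ ^ 2 := by
    rw [norm_sub_sq_real]; ring
  have hexp : exp (-‖ζ‖ ^ 2 / 8) * exp (-(‖v‖ ^ 2 - ‖v - ζ‖ ^ 2) ^ 2 / (8 * ‖ζ‖ ^ 2)) *
      exp (ϖ * (‖v‖ ^ 2 - ‖v - ζ‖ ^ 2)) ≤ exp (-‖ζ‖ ^ 2 / 64) * exp (-|inner ℝ v ζ| / 16) := by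
    simp only [← exp_add, hD, exp_le_exp]
    have := gaussian_exponent_le (t := inner ℝ v ζ) hs hϖ0 hϖ
    convert this using 1 <;> ring
  have hpeetre := one_add_norm_sq_div_rpow_le (β / 2) v (v - ζ)
  rw [sub_sub_cancel] at hpeetre
  rw [gradKernel, sub_sub_cancel, wt_div_wt]
  calc _ = (‖ζ‖ + ‖ζ‖⁻¹) * ((1 + ‖v‖ ^ 2) / (1 + ‖v - ζ‖ ^ 2)) ^ (β / 2) *
        (exp (-‖ζ‖ ^ 2 / 8) * exp (-(‖v‖ ^ 2 - ‖v - ζ‖ ^ 2) ^ 2 / (8 * ‖ζ‖ ^ 2)) *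
          exp (ϖ * (‖v‖ ^ 2 - ‖v - ζ‖ ^ 2))) := by ring
    _ ≤ _ := by gcongr

theorem exists_gradKernel_sub_le {β ϖ : ℝ} (hϖ0 : 0 ≤ ϖ) (hϖ : ϖ ≤ 1 / 8) :
    ∃ K > 0, ∀ v ζ : V, gradKernel β ϖ v (v - ζ) ≤
      K * ((1 + ‖ζ‖⁻¹) * exp (-‖ζ‖ ^ 2 / 128) * exp (-|inner ℝ v ζ| / 16)) := by
  obtain ⟨C, hC0, hC⟩ := exists_one_add_sq_rpow_le_mul_exp (γ := 1 + |β / 2|) (c := 1 / 128)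
    (by positivity) (by norm_num)
  refine ⟨2 ^ |β / 2| * C, by positivity, fun v ζ => (gradKernel_sub_le hϖ0 hϖ v ζ).trans ?_⟩
  set s := ‖ζ‖
  have hpoly : (1 + s ^ 2) * (2 * (1 + s ^ 2)) ^ |β / 2| * exp (-s ^ 2 / 64) ≤
      2 ^ |β / 2| * C * exp (-s ^ 2 / 128) := by
    calc (1 + s ^ 2) * (2 * (1 + s ^ 2)) ^ |β / 2| * exp (-s ^ 2 / 64)
        = 2 ^ |β / 2| * ((1 + s ^ 2) ^ (1 + |β / 2|) * exp (-s ^ 2 / 64)) := by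
          rw [mul_rpow zero_le_two (by positivity), rpow_add (by positivity), rpow_one]
          ring
      _ ≤ 2 ^ |β / 2| * (C * exp (1 / 128 * s ^ 2) * exp (-s ^ 2 / 64)) := by
          gcongr; exact hC s
      _ = 2 ^ |β / 2| * C * exp (-s ^ 2 / 128) := by
          rw [mul_assoc C, ← exp_add]; ring_nf
  calc (s + s⁻¹) * (2 * (1 + s ^ 2)) ^ |β / 2| * (exp (-s ^ 2 / 64) * exp (-|inner ℝ v ζ| / 16))
      ≤ (1 + s ^ 2) * (1 + s⁻¹) * (2 * (1 + s ^ 2)) ^ |β / 2| *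
          (exp (-s ^ 2 / 64) * exp (-|inner ℝ v ζ| / 16)) := by
        gcongr; exact add_inv_le_one_add_sq_mul (norm_nonneg ζ)
    _ = (1 + s ^ 2) * (2 * (1 + s ^ 2)) ^ |β / 2| * exp (-s ^ 2 / 64) *
          ((1 + s⁻¹) * exp (-|inner ℝ v ζ| / 16)) := by ring
    _ ≤ 2 ^ |β / 2| * C * exp (-s ^ 2 / 128) * ((1 + s⁻¹) * exp (-|inner ℝ v ζ| / 16)) := by
        gcongr
    _ = _ := by ring

theorem norm_sq_eq_fin_three (ζ : V) : ‖ζ‖ ^ 2 = ζ 0 ^ 2 + ζ 1 ^ 2 + ζ 2 ^ 2 := by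
  simp [EuclideanSpace.norm_sq_eq, Fin.sum_univ_three]

theorem inv_norm_le_rpow_mul_rpow {ζ : V} (h1 : ζ 1 ≠ 0) (h2 : ζ 2 ≠ 0) :
    ‖ζ‖⁻¹ ≤ |ζ 1| ^ (-(1 / 2) : ℝ) * |ζ 2| ^ (-(1 / 2) : ℝ) := by
  have hprod : 0 < |ζ 1| * |ζ 2| := by positivity
  have hle : |ζ 1| * |ζ 2| ≤ ‖ζ‖ ^ 2 := by
    rw [norm_sq_eq_fin_three, ← sq_abs (ζ 1), ← sq_abs (ζ 2)]
    nlinarith [sq_nonneg (|ζ 1| - |ζ 2|), sq_nonneg (ζ 0)]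
  calc ‖ζ‖⁻¹ = (‖ζ‖ ^ 2) ^ (-(1 / 2) : ℝ) := by
        rw [← rpow_natCast, ← rpow_mul (norm_nonneg ζ)]; norm_num [rpow_neg_one]
    _ ≤ (|ζ 1| * |ζ 2|) ^ (-(1 / 2) : ℝ) := rpow_le_rpow_of_nonpos hprod hle (by norm_num)
    _ = _ := mul_rpow (abs_nonneg _) (abs_nonneg _)

theorem one_add_inv_norm_mul_exp_le_prod {a : ℝ} (ha : 0 ≤ a) {ζ : V} (h1 : ζ 1 ≠ 0)
    (h2 : ζ 2 ≠ 0) :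
    (1 + ‖ζ‖⁻¹) * exp (-‖ζ‖ ^ 2 / 128) * exp (-|a * ζ 0| / 16) ≤
      exp (-(a * |ζ 0|) / 16) * exp (-ζ 0 ^ 2 / 128) * singularGaussian (ζ 1) *
        singularGaussian (ζ 2) := by
  set B := |ζ 1| ^ (-(1 / 2) : ℝ)
  set C := |ζ 2| ^ (-(1 / 2) : ℝ)
  have hB : 0 ≤ B := by positivity
  have hC : 0 ≤ C := by positivity
  have hsplit : exp (-‖ζ‖ ^ 2 / 128) =
      exp (-ζ 0 ^ 2 / 128) * exp (-ζ 1 ^ 2 / 128) * exp (-ζ 2 ^ 2 / 128) := by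
    rw [← exp_add, ← exp_add, norm_sq_eq_fin_three]; ring_nf
  rw [hsplit, abs_mul, abs_of_nonneg ha]
  calc _ ≤ (1 + B * C) * (exp (-ζ 0 ^ 2 / 128) * exp (-ζ 1 ^ 2 / 128) *
        exp (-ζ 2 ^ 2 / 128)) * exp (-(a * |ζ 0|) / 16) := by
        gcongr; exact inv_norm_le_rpow_mul_rpow h1 h2
    _ ≤ (1 + B) * (1 + C) * (exp (-ζ 0 ^ 2 / 128) * exp (-ζ 1 ^ 2 / 128) *
        exp (-ζ 2 ^ 2 / 128)) * exp (-(a * |ζ 0|) / 16) := by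
        gcongr; nlinarith
    _ = _ := by unfold singularGaussian; ring

theorem exists_integral_gradKernel_single_le {β ϖ : ℝ} (hϖ0 : 0 ≤ ϖ) (hϖ : ϖ ≤ 1 / 8) :
    ∃ C, ∀ a : ℝ, 0 ≤ a →
      ∫ u, gradKernel β ϖ (EuclideanSpace.single 0 a) u ≤ C * (1 + a)⁻¹ := by
  obtain ⟨K, hK0, hK⟩ := exists_gradKernel_sub_le (β := β) hϖ0 hϖ
  set S := ∫ x, singularGaussian x
  set g : ℝ → ℝ := fun x => exp (-x ^ 2 / 128)
  refine ⟨K * (2 * (∫ x, g x) + 64) * S ^ 2, fun a ha => ?_⟩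
  set v : V := EuclideanSpace.single 0 a
  set P : Fin 3 → ℝ → ℝ := ![fun x => exp (-(a * |x|) / 16) * g x, singularGaussian,
    singularGaussian]
  have hP : ∀ ζ : V, ∏ i, P i (ζ i) =
      exp (-(a * |ζ 0|) / 16) * g (ζ 0) * singularGaussian (ζ 1) * singularGaussian (ζ 2) := by
    intro ζ; simp [P, Fin.prod_univ_three, mul_assoc]
  have hg : Integrable g := integrable_exp_neg_sq_div (by norm_num)
  have hPint : ∀ i, Integrable (P i) := by
    intro i
    fin_cases i
    exacts [hg.exp_neg_mul_abs_div_mul ha (by norm_num), integrable_singularGaussian,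
      integrable_singularGaussian]
  have hdecay := integral_exp_neg_mul_abs_mul_le hg (fun x => (exp_pos _).le) (M := 1)
    (fun x => exp_le_one_iff.mpr (by have := sq_nonneg x; linarith)) (c := 16) (by norm_num) ha
  calc ∫ u, gradKernel β ϖ v u = ∫ ζ, gradKernel β ϖ v (v - ζ) :=
        (integral_sub_left_eq_self _ _ _).symm
    _ ≤ ∫ ζ : V, K * ∏ i, P i (ζ i) := by
        refine integral_mono_of_nonneg (.of_forall fun ζ => gradKernel_nonneg ..)
          ((EuclideanSpace.integrable_prod_apply hPint).const_mul K) ?_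
        filter_upwards [EuclideanSpace.ae_apply_ne_zero 1, EuclideanSpace.ae_apply_ne_zero 2]
          with ζ h1 h2
        refine (hK v ζ).trans ?_
        have hinner : inner ℝ v ζ = a * ζ 0 := by simp [v, EuclideanSpace.inner_single_left]
        rw [hP, hinner]
        exact mul_le_mul_of_nonneg_left (one_add_inv_norm_mul_exp_le_prod ha h1 h2) hK0.le
    _ = K * ((∫ x, exp (-(a * |x|) / 16) * g x) * S ^ 2) := by
        rw [integral_const_mul, EuclideanSpace.integral_prod_apply, Fin.prod_univ_three]
        congr 1
        simp [P, S]; ring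
    _ ≤ K * ((2 * (∫ x, g x) + 4 * 16 * 1) / (1 + a) * S ^ 2) := by gcongr
    _ = _ := by ring

theorem stmt7_general (β ϖ : ℝ) (hϖ0 : 0 < ϖ) (hϖ : ϖ ≤ 1/8) :
    ∃ C > (0:ℝ), ∀ v : V,
      ∫ u : V,
        (‖v - u‖ + ‖v - u‖⁻¹) * Real.exp (-‖v - u‖ ^ 2 / 8) *
          Real.exp (-(‖v‖ ^ 2 - ‖u‖ ^ 2) ^ 2 / (8 * ‖v - u‖ ^ 2)) *
          (wt β ϖ v / wt β ϖ u) ≤ C * (1 + ‖v‖)⁻¹ := by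
  obtain ⟨C, hC⟩ := exists_integral_gradKernel_single_le (β := β) hϖ0.le hϖ
  refine ⟨max C 1, by positivity, fun v => ?_⟩
  have hv : ‖v‖ = ‖EuclideanSpace.single (0 : Fin 3) ‖v‖‖ := by simp
  calc ∫ u, gradKernel β ϖ v u
      = ∫ u, gradKernel β ϖ (EuclideanSpace.single 0 ‖v‖) u :=
        integral_eq_of_invariant_of_norm_eq (gradKernel_linearIsometryEquiv β ϖ) hv
    _ ≤ C * (1 + ‖v‖)⁻¹ := hC _ (norm_nonneg v)
    _ ≤ max C 1 * (1 + ‖v‖)⁻¹ := by gcongr; exact le_max_left C 1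

/-- The weighted Grad-kernel estimate
`∫ (|v−u| + |v−u|⁻¹) e^{−|v−u|²/8} e^{−(|v|²−|u|²)²/(8|v−u|²)} (w(v)/w(u)) du ≤ C (1+|v|)⁻¹`. -/
theorem stmt7 (β ϖ : ℝ) (hβ : 3 < β) (hϖ0 : 0 < ϖ) (hϖ : ϖ ≤ 1/8) :
    ∃ C > (0:ℝ), ∀ v : V,
      ∫ u : V,
        (‖v - u‖ + ‖v - u‖⁻¹) * Real.exp (-‖v - u‖ ^ 2 / 8) *
          Real.exp (-(‖v‖ ^ 2 - ‖u‖ ^ 2) ^ 2 / (8 * ‖v - u‖ ^ 2)) *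
          (wt β ϖ v / wt β ϖ u) ≤ C * (1 + ‖v‖)⁻¹ :=
  stmt7_general β ϖ hϖ0 hϖ
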